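/- Let Ω ⊆ ℝ^4 be open and let u, v, w : Ω → ℝ be smooth. On Ω × ℝ (with coordinates x^1, x^2, x^3, x^4, λ) define the vector fields X₁ = ∂₃ + v₁∂₁ + u₁∂₂ − λ∂₁ + w₁∂_λ and X₂ = ∂₄ + v₂∂₁ + u₂∂₂ − λ∂₂ + w₂∂_λ. Then [X₁, X₂] = 0 identically on Ω × ℝ if and only if Q₁(u) = w₁, Q₁(v) = −w₂ and Q₁(w) = 0 hold on Ω, where Q₁ = ∂₂∂₃ − ∂₁∂₄ + u₁∂₂² + (v₁ − u₂)∂₁∂₂ − v₂∂₁². -/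

import Mathlib

/-- The `i`-th standard coordinate (basis) vector of `ℝᵐ`. -/
noncomputable def e (m : ℕ) (i : Fin m) : Fin m → ℝ := Pi.single i 1

/-- Partial derivative `∂f/∂xⁱ` of a scalar function on `ℝᵐ`. -/
noncomputable def pd (m : ℕ) (f : (Fin m → ℝ) → ℝ) (i : Fin m) (x : Fin m → ℝ) : ℝ :=
  fderiv ℝ f x (e m i)

/-- Second partial derivative `∂²f/∂xⁱ∂xʲ`. -/
noncomputable def pd2 (m : ℕ) (f : (Fin m → ℝ) → ℝ) (i j : Fin m) (x : Fin m → ℝ) : ℝ :=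
  pd m (fun y => pd m f i y) j x

/-- Lie bracket of vector fields on (an open subset of) `ℝᵐ`:
`[X,Y](x) = DY(x)·X(x) − DX(x)·Y(x)`. -/
noncomputable def vbr (m : ℕ) (X Y : (Fin m → ℝ) → (Fin m → ℝ)) (x : Fin m → ℝ) :
    Fin m → ℝ :=
  fderiv ℝ Y x (X x) - fderiv ℝ X x (Y x)

/-- Projection from `ℝ⁵ = Ω × ℝ` (coordinates `x¹,…,x⁴,λ`) to `ℝ⁴`. -/
noncomputable def proj45 (z : Fin 5 → ℝ) : Fin 4 → ℝ := fun i => z i.castSucc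

/-- `X₁ = ∂₃ + v₁∂₁ + u₁∂₂ − λ∂₁ + w₁∂_λ` (coordinates `x¹,…,x⁴` indexed by
`0,…,3`, `λ` by `4`). -/
noncomputable def XF1 (u v w : (Fin 4 → ℝ) → ℝ) (z : Fin 5 → ℝ) : Fin 5 → ℝ :=
  e 5 2 + pd 4 v 0 (proj45 z) • e 5 0 + pd 4 u 0 (proj45 z) • e 5 1
  - z 4 • e 5 0 + pd 4 w 0 (proj45 z) • e 5 4

/-- `X₂ = ∂₄ + v₂∂₁ + u₂∂₂ − λ∂₂ + w₂∂_λ`. -/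
noncomputable def XF2 (u v w : (Fin 4 → ℝ) → ℝ) (z : Fin 5 → ℝ) : Fin 5 → ℝ :=
  e 5 3 + pd 4 v 1 (proj45 z) • e 5 0 + pd 4 u 1 (proj45 z) • e 5 1
  - z 4 • e 5 1 + pd 4 w 1 (proj45 z) • e 5 4

/-- The operator `Q₁ = ∂₂∂₃ − ∂₁∂₄ + u₁∂₂² + (v₁−u₂)∂₁∂₂ − v₂∂₁²`. -/
noncomputable def Q1op (u v f : (Fin 4 → ℝ) → ℝ) (x : Fin 4 → ℝ) : ℝ :=
  pd2 4 f 1 2 x - pd2 4 f 0 3 x + pd 4 u 0 x * pd2 4 f 1 1 x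
  + (pd 4 v 0 x - pd 4 u 1 x) * pd2 4 f 0 1 x - pd 4 v 1 x * pd2 4 f 0 0 x

/-! Each field is `X_a = ∂_{a+2} + (∂_a v)∂₁ + (∂_a u)∂₂ − λ∂_a + (∂_a w)∂_λ` with coefficients
depending only on `x`, so the `∂₃, ∂₄` components of `[X₁, X₂]` vanish and its `∂₁, ∂₂, ∂_λ`
components are `X₁(∂₂f) − X₂(∂₁f)` for `f = v, u, w`, corrected by `+w₂`, `−w₁`, `0` from the
`λ`-coefficients. Expanding, `X₁(∂₂f) − X₂(∂₁f) = Q₁ f`: the two terms `λ ∂₁∂₂f` cancel by the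
symmetry of second derivatives. -/

section Partials

variable {m : ℕ} {f : (Fin m → ℝ) → ℝ} {x : Fin m → ℝ}

theorem fderiv_apply_eq_sum_pd (f : (Fin m → ℝ) → ℝ) (x y : Fin m → ℝ) :
    fderiv ℝ f x y = ∑ i, y i * pd m f i x := by
  conv_lhs => rw [← (Pi.basisFun ℝ (Fin m)).sum_repr y]
  simp [map_sum, pd, e]

theorem pd2_eq_fderiv_fderiv (hf : ContDiffAt ℝ 2 f x) (i j : Fin m) :
    pd2 m f i j x = fderiv ℝ (fderiv ℝ f) x (e m j) (e m i) := by
  have hf' : DifferentiableAt ℝ (fderiv ℝ f) x :=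
    (hf.fderiv_right (m := 1) (by norm_num)).differentiableAt one_ne_zero
  have h : HasFDerivAt (pd m f i)
      ((ContinuousLinearMap.apply ℝ ℝ (e m i)).comp (fderiv ℝ (fderiv ℝ f) x)) x :=
    (ContinuousLinearMap.apply ℝ ℝ (e m i)).hasFDerivAt.comp x hf'.hasFDerivAt
  exact congrArg (· (e m j)) h.fderiv

theorem pd2_comm (hf : ContDiffAt ℝ 2 f x) (i j : Fin m) :
    pd2 m f i j x = pd2 m f j i x := by
  rw [pd2_eq_fderiv_fderiv hf, pd2_eq_fderiv_fderiv hf]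
  exact hf.isSymmSndFDerivAt (by simp [minSmoothness_of_isRCLikeNormedField]) _ _

theorem pd_pd (f : (Fin m → ℝ) → ℝ) (i j : Fin m) (x : Fin m → ℝ) :
    pd m (pd m f i) j x = pd2 m f i j x := rfl

theorem differentiableAt_pd (hf : ContDiffAt ℝ 2 f x) (i : Fin m) :
    DifferentiableAt ℝ (pd m f i) x :=
  ((hf.fderiv_right (m := 1) (by norm_num)).differentiableAt one_ne_zero).clm_apply
    (differentiableAt_const _)

end Partials

theorem smul_e_add_smul_e_add_smul_e_eq_zero_iff {m : ℕ} {i j k : Fin m} (hij : i ≠ j)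
    (hik : i ≠ k) (hjk : j ≠ k) {a b c : ℝ} :
    a • e m i + b • e m j + c • e m k = 0 ↔ a = 0 ∧ b = 0 ∧ c = 0 := by
  refine ⟨fun h => ⟨?_, ?_, ?_⟩, fun ⟨ha, hb, hc⟩ => by simp [ha, hb, hc]⟩
  · simpa [e, hij, hik] using congrFun h i
  · simpa [e, hij.symm, hjk] using congrFun h j
  · simpa [e, hik.symm, hjk.symm] using congrFun h k

def proj45CLM : (Fin 5 → ℝ) →L[ℝ] (Fin 4 → ℝ) :=
  ContinuousLinearMap.pi fun i => ContinuousLinearMap.proj i.castSucc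

@[simp]
theorem proj45CLM_apply (z : Fin 5 → ℝ) : proj45CLM z = proj45 z := rfl

theorem hasFDerivAt_comp_proj45 {g : (Fin 4 → ℝ) → ℝ} {z : Fin 5 → ℝ}
    (hg : DifferentiableAt ℝ g (proj45 z)) :
    HasFDerivAt (fun z => g (proj45 z)) ((fderiv ℝ g (proj45 z)).comp proj45CLM) z :=
  hg.hasFDerivAt.comp z proj45CLM.hasFDerivAt

section LaxPair

variable {u v w : (Fin 4 → ℝ) → ℝ} {z : Fin 5 → ℝ}

theorem proj45_XF1 (u v w : (Fin 4 → ℝ) → ℝ) (z : Fin 5 → ℝ) :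
    proj45 (XF1 u v w z) = ![pd 4 v 0 (proj45 z) - z 4, pd 4 u 0 (proj45 z), 1, 0] := by
  ext k; fin_cases k <;> simp [proj45, XF1, e]

theorem proj45_XF2 (u v w : (Fin 4 → ℝ) → ℝ) (z : Fin 5 → ℝ) :
    proj45 (XF2 u v w z) = ![pd 4 v 1 (proj45 z), pd 4 u 1 (proj45 z) - z 4, 0, 1] := by
  ext k; fin_cases k <;> simp [proj45, XF2, e]

theorem XF1_apply_four (u v w : (Fin 4 → ℝ) → ℝ) (z : Fin 5 → ℝ) :
    XF1 u v w z 4 = pd 4 w 0 (proj45 z) := by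
  simp [XF1, e]

theorem XF2_apply_four (u v w : (Fin 4 → ℝ) → ℝ) (z : Fin 5 → ℝ) :
    XF2 u v w z 4 = pd 4 w 1 (proj45 z) := by
  simp [XF2, e]

theorem fderiv_XF1_apply (hu : DifferentiableAt ℝ (pd 4 u 0) (proj45 z))
    (hv : DifferentiableAt ℝ (pd 4 v 0) (proj45 z))
    (hw : DifferentiableAt ℝ (pd 4 w 0) (proj45 z)) (y : Fin 5 → ℝ) :
    fderiv ℝ (XF1 u v w) z y =
      fderiv ℝ (pd 4 v 0) (proj45 z) (proj45 y) • e 5 0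
      + fderiv ℝ (pd 4 u 0) (proj45 z) (proj45 y) • e 5 1 - y 4 • e 5 0
      + fderiv ℝ (pd 4 w 0) (proj45 z) (proj45 y) • e 5 4 := by
  have h : HasFDerivAt (XF1 u v w) _ z := ((((hasFDerivAt_const (e 5 2) z).add
    ((hasFDerivAt_comp_proj45 hv).smul_const (e 5 0))).add
    ((hasFDerivAt_comp_proj45 hu).smul_const (e 5 1))).sub
    ((hasFDerivAt_apply 4 z).smul_const (e 5 0))).add
    ((hasFDerivAt_comp_proj45 hw).smul_const (e 5 4))
  rw [h.fderiv]
  simp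

theorem fderiv_XF2_apply (hu : DifferentiableAt ℝ (pd 4 u 1) (proj45 z))
    (hv : DifferentiableAt ℝ (pd 4 v 1) (proj45 z))
    (hw : DifferentiableAt ℝ (pd 4 w 1) (proj45 z)) (y : Fin 5 → ℝ) :
    fderiv ℝ (XF2 u v w) z y =
      fderiv ℝ (pd 4 v 1) (proj45 z) (proj45 y) • e 5 0
      + fderiv ℝ (pd 4 u 1) (proj45 z) (proj45 y) • e 5 1 - y 4 • e 5 1
      + fderiv ℝ (pd 4 w 1) (proj45 z) (proj45 y) • e 5 4 := by
  have h : HasFDerivAt (XF2 u v w) _ z := ((((hasFDerivAt_const (e 5 3) z).add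
    ((hasFDerivAt_comp_proj45 hv).smul_const (e 5 0))).add
    ((hasFDerivAt_comp_proj45 hu).smul_const (e 5 1))).sub
    ((hasFDerivAt_apply 4 z).smul_const (e 5 1))).add
    ((hasFDerivAt_comp_proj45 hw).smul_const (e 5 4))
  rw [h.fderiv]
  simp

theorem Q1op_eq_fderiv_pd_XF1_sub_fderiv_pd_XF2 {f : (Fin 4 → ℝ) → ℝ}
    (hf : ContDiffAt ℝ 2 f (proj45 z)) :
    Q1op u v f (proj45 z) = fderiv ℝ (pd 4 f 1) (proj45 z) (proj45 (XF1 u v w z))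
      - fderiv ℝ (pd 4 f 0) (proj45 z) (proj45 (XF2 u v w z)) := by
  simp [proj45_XF1, proj45_XF2, fderiv_apply_eq_sum_pd, Fin.sum_univ_four, pd_pd,
    pd2_comm hf 1 0, Q1op]
  ring

theorem vbr_XF1_XF2 (hu : ContDiffAt ℝ 2 u (proj45 z)) (hv : ContDiffAt ℝ 2 v (proj45 z))
    (hw : ContDiffAt ℝ 2 w (proj45 z)) :
    vbr 5 (XF1 u v w) (XF2 u v w) z =
      (Q1op u v v (proj45 z) + pd 4 w 1 (proj45 z)) • e 5 0
      + (Q1op u v u (proj45 z) - pd 4 w 0 (proj45 z)) • e 5 1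
      + Q1op u v w (proj45 z) • e 5 4 := by
  rw [vbr, fderiv_XF1_apply (differentiableAt_pd hu 0) (differentiableAt_pd hv 0)
    (differentiableAt_pd hw 0), fderiv_XF2_apply (differentiableAt_pd hu 1)
    (differentiableAt_pd hv 1) (differentiableAt_pd hw 1), XF1_apply_four, XF2_apply_four,
    Q1op_eq_fderiv_pd_XF1_sub_fderiv_pd_XF2 (w := w) hu,
    Q1op_eq_fderiv_pd_XF1_sub_fderiv_pd_XF2 (w := w) hv,
    Q1op_eq_fderiv_pd_XF1_sub_fderiv_pd_XF2 (w := w) hw]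
  module

theorem vbr_XF1_XF2_eq_zero_iff (hu : ContDiffAt ℝ 2 u (proj45 z))
    (hv : ContDiffAt ℝ 2 v (proj45 z)) (hw : ContDiffAt ℝ 2 w (proj45 z)) :
    vbr 5 (XF1 u v w) (XF2 u v w) z = 0 ↔
      Q1op u v u (proj45 z) = pd 4 w 0 (proj45 z) ∧ Q1op u v v (proj45 z) = -pd 4 w 1 (proj45 z)
        ∧ Q1op u v w (proj45 z) = 0 := by
  rw [vbr_XF1_XF2 hu hv hw, smul_e_add_smul_e_add_smul_e_eq_zero_iff (by decide) (by decide)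
    (by decide), add_eq_zero_iff_eq_neg, sub_eq_zero]
  tauto

end LaxPair

theorem proj45_snoc (x : Fin 4 → ℝ) (t : ℝ) : proj45 (Fin.snoc x t) = x := by
  ext i; simp [proj45]

/-- Construction 1 (4D): `[X₁,X₂] = 0` identically on `Ω × ℝ` iff
`Q₁(u) = w₁`, `Q₁(v) = −w₂`, `Q₁(w) = 0` on `Ω`. -/
theorem stmt_7 (Ω : Set (Fin 4 → ℝ)) (hΩ : IsOpen Ω)
    (u v w : (Fin 4 → ℝ) → ℝ)
    (hu : ContDiffOn ℝ (⊤:ℕ∞) u Ω) (hv : ContDiffOn ℝ (⊤:ℕ∞) v Ω)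
    (hw : ContDiffOn ℝ (⊤:ℕ∞) w Ω) :
    (∀ z : Fin 5 → ℝ, proj45 z ∈ Ω → vbr 5 (XF1 u v w) (XF2 u v w) z = 0) ↔
      (∀ x ∈ Ω, Q1op u v u x = pd 4 w 0 x ∧ Q1op u v v x = -pd 4 w 1 x
        ∧ Q1op u v w x = 0) := by
  have hC2 {f : (Fin 4 → ℝ) → ℝ} (hf : ContDiffOn ℝ (⊤:ℕ∞) f Ω) {x : Fin 4 → ℝ} (hx : x ∈ Ω) :
      ContDiffAt ℝ 2 f x :=
    (hf.contDiffAt (hΩ.mem_nhds hx)).of_le (WithTop.coe_le_coe.mpr le_top)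
  have hbracket {z : Fin 5 → ℝ} (hz : proj45 z ∈ Ω) :=
    vbr_XF1_XF2_eq_zero_iff (hC2 hu hz) (hC2 hv hz) (hC2 hw hz)
  constructor
  · intro h x hx
    rw [← proj45_snoc x 0] at hx ⊢
    exact (hbracket hx).1 (h _ hx)
  · exact fun h z hz => (hbracket hz).2 (h _ hz)
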